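/- arXiv:2210.12449 — 2 statements merged into one kernel-verified Lean document; each statement's English description precedes it below -/
import Mathlib

section
/- Let a > 0, b ≥ 0, p > 0, θ ∈ (0,1), c > 0, and let (x^k) be a sequence in ℝ^n with limit x̃ such that for all k ≥ K: (i) Φ(x^{k+1}) + a‖x^{k+1}−x^k‖^{p+1} ≤ Φ(x^k); (ii) Φ(x^k) > Φ(x̃); and (iii) (Φ(x^k) − Φ(x̃))^θ ≤ b c (1−θ) ‖x^k − x^{k-1}‖^p. Then for all k ≥ K, ‖x^{k+1} − x^k‖ ≤ (bc(1−θ)/a^θ)^{1/(θ(p+1))} ‖x^k − x^{k-1}‖^{p/(θ(p+1))}. -/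
theorem KL_step_recursion {n : ℕ} (x : ℕ → EuclideanSpace ℝ (Fin n))
    (Φ : EuclideanSpace ℝ (Fin n) → ℝ) (xt : EuclideanSpace ℝ (Fin n))
    (a b c p θ : ℝ) (K : ℕ) (hK : 1 ≤ K)
    (ha : 0 < a) (hb : 0 ≤ b) (hp : 0 < p) (hθ : θ ∈ Set.Ioo (0 : ℝ) 1) (hc : 0 < c)
    (hx : Filter.Tendsto x Filter.atTop (nhds xt))
    (hH1 : ∀ k, K ≤ k → Φ (x (k + 1)) + a * ‖x (k + 1) - x k‖ ^ (p + 1) ≤ Φ (x k))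
    (hgap : ∀ k, K ≤ k → Φ (xt) < Φ (x k))
    (hKL : ∀ k, K ≤ k → (Φ (x k) - Φ xt) ^ θ ≤ b * c * (1 - θ) * ‖x k - x (k - 1)‖ ^ p) :
    ∀ k, K ≤ k → ‖x (k + 1) - x k‖ ≤
      (b * c * (1 - θ) / a ^ θ) ^ (1 / (θ * (p + 1))) * ‖x k - x (k - 1)‖ ^ (p / (θ * (p + 1))) := by
  intro k hk
  obtain ⟨hθ0, hθ1⟩ := hθ
  set N := ‖x (k + 1) - x k‖ with hN
  set D := ‖x k - x (k - 1)‖ with hD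
  have hN0 : 0 ≤ N := norm_nonneg _
  have hD0 : 0 ≤ D := norm_nonneg _
  have haθ : (0:ℝ) < a ^ θ := Real.rpow_pos_of_pos ha θ
  have hq : (0:ℝ) < θ * (p + 1) := mul_pos hθ0 (by linarith)
  -- Step 1 : a * N^(p+1) ≤ Φ(x k) - Φ xt
  have h1 : a * N ^ (p + 1) ≤ Φ (x k) - Φ xt := by
    have := hH1 k hk
    have := hgap (k + 1) (le_trans hk (Nat.le_succ k))
    linarith
  have hE0 : (0:ℝ) ≤ a * N ^ (p + 1) :=
    mul_nonneg ha.le (Real.rpow_nonneg hN0 _)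
  -- Step 2 : raise to θ
  have h2 : (a * N ^ (p + 1)) ^ θ ≤ (Φ (x k) - Φ xt) ^ θ :=
    Real.rpow_le_rpow hE0 h1 hθ0.le
  have h3 : a ^ θ * N ^ ((p + 1) * θ) ≤ b * c * (1 - θ) * D ^ p := by
    have heq : (a * N ^ (p + 1)) ^ θ = a ^ θ * N ^ ((p + 1) * θ) := by
      rw [Real.mul_rpow ha.le (Real.rpow_nonneg hN0 _), ← Real.rpow_mul hN0]
    calc a ^ θ * N ^ ((p + 1) * θ) = (a * N ^ (p + 1)) ^ θ := heq.symm
      _ ≤ (Φ (x k) - Φ xt) ^ θ := h2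
      _ ≤ b * c * (1 - θ) * D ^ p := hKL k hk
  have h4 : N ^ (θ * (p + 1)) ≤ (b * c * (1 - θ) / a ^ θ) * D ^ p := by
    rw [div_mul_eq_mul_div, le_div_iff₀ haθ, mul_comm θ (p + 1)]
    linarith [h3]
  -- raise to 1/(θ(p+1))
  have hRHS0 : (0:ℝ) ≤ b * c * (1 - θ) / a ^ θ :=
    div_nonneg (mul_nonneg (mul_nonneg hb hc.le) (by linarith)) haθ.le
  have h5 : (N ^ (θ * (p + 1))) ^ (1 / (θ * (p + 1))) ≤
      ((b * c * (1 - θ) / a ^ θ) * D ^ p) ^ (1 / (θ * (p + 1))) :=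
    Real.rpow_le_rpow (Real.rpow_nonneg hN0 _) h4 (by positivity)
  have hL : (N ^ (θ * (p + 1))) ^ (1 / (θ * (p + 1))) = N := by
    rw [← Real.rpow_mul hN0, mul_one_div, div_self hq.ne', Real.rpow_one]
  have hR : ((b * c * (1 - θ) / a ^ θ) * D ^ p) ^ (1 / (θ * (p + 1))) =
      (b * c * (1 - θ) / a ^ θ) ^ (1 / (θ * (p + 1))) * D ^ (p / (θ * (p + 1))) := by
    rw [Real.mul_rpow hRHS0 (Real.rpow_nonneg hD0 _), ← Real.rpow_mul hD0,
      mul_one_div]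
  rw [hL, hR] at h5
  exact h5
end

section
/- Let b ≥ 0, c > 0, θ ∈ (0,1), p > 0, a > 0, and suppose for all k ≥ K a sequence of nonnegative reals (d_k) and (s_k) satisfies d_{k+1} ≤ b s_{k+1}^p and s_{k+1} ≤ (bc(1−θ)/a^θ)^{1/(θ(p+1))} s_k^{p/(θ(p+1))}. If θ < p/(p+1), then d_{k+1} ≤ b (bc(1−θ)/a^θ)^{p/(θ(p+1))} s_k^{p²/(θ(1+p))}, with exponent p²/(θ(1+p)) > p. -/
theorem subgradient_superlinear (b c θ p a : ℝ) (K : ℕ) (d s : ℕ → ℝ)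
    (hb : 0 ≤ b) (hc : 0 < c) (hθ : θ ∈ Set.Ioo (0 : ℝ) 1) (hp : 0 < p) (ha : 0 < a)
    (hd : ∀ k, 0 ≤ d k) (hs : ∀ k, 0 ≤ s k)
    (hH2 : ∀ k, K ≤ k → d (k + 1) ≤ b * s (k + 1) ^ p)
    (hrec : ∀ k, K ≤ k →
      s (k + 1) ≤ (b * c * (1 - θ) / a ^ θ) ^ (1 / (θ * (p + 1))) * s k ^ (p / (θ * (p + 1))))
    (hθp : θ < p / (p + 1)) :
    (∀ k, K ≤ k → d (k + 1) ≤
        b * (b * c * (1 - θ) / a ^ θ) ^ (p / (θ * (p + 1))) * s k ^ (p ^ 2 / (θ * (1 + p)))) ∧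
      p < p ^ 2 / (θ * (1 + p)) := by
  obtain ⟨hθ0, hθ1⟩ := hθ
  have hC : (0:ℝ) ≤ b * c * (1 - θ) / a ^ θ := by
    apply div_nonneg
    · have : (0:ℝ) ≤ 1 - θ := by linarith
      positivity
    · positivity
  have hθp1 : 0 < θ * (p + 1) := by positivity
  constructor
  · intro k hk
    have h1 := hH2 k hk
    have h2 := hrec k hk
    have hrhs : (0:ℝ) ≤ (b * c * (1 - θ) / a ^ θ) ^ (1 / (θ * (p + 1))) *
        s k ^ (p / (θ * (p + 1))) :=
      mul_nonneg (Real.rpow_nonneg hC _) (Real.rpow_nonneg (hs k) _)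
    have h3 : s (k + 1) ^ p ≤ ((b * c * (1 - θ) / a ^ θ) ^ (1 / (θ * (p + 1))) *
        s k ^ (p / (θ * (p + 1)))) ^ p := Real.rpow_le_rpow (hs _) h2 hp.le
    have h4 : ((b * c * (1 - θ) / a ^ θ) ^ (1 / (θ * (p + 1))) *
        s k ^ (p / (θ * (p + 1)))) ^ p =
        (b * c * (1 - θ) / a ^ θ) ^ (p / (θ * (p + 1))) *
        s k ^ (p ^ 2 / (θ * (1 + p))) := by
      rw [Real.mul_rpow (Real.rpow_nonneg hC _) (Real.rpow_nonneg (hs k) _),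
        ← Real.rpow_mul hC, ← Real.rpow_mul (hs k)]
      congr 1
      · congr 1; field_simp
      · congr 1
        rw [show (p:ℝ) ^ 2 = p * p from sq p]
        rw [div_mul_eq_mul_div, div_eq_div_iff hθp1.ne' (by positivity)]
        ring
    calc d (k + 1) ≤ b * s (k + 1) ^ p := h1
      _ ≤ b * ((b * c * (1 - θ) / a ^ θ) ^ (1 / (θ * (p + 1))) *
          s k ^ (p / (θ * (p + 1)))) ^ p := by
        exact mul_le_mul_of_nonneg_left h3 hb
      _ = b * (b * c * (1 - θ) / a ^ θ) ^ (p / (θ * (p + 1))) *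
          s k ^ (p ^ 2 / (θ * (1 + p))) := by rw [h4]; ring
  · have h : θ * (1 + p) < p := by
      have hp1 : 0 < p + 1 := by linarith
      rw [lt_div_iff₀ hp1] at hθp
      linarith
    rw [lt_div_iff₀ (by positivity)]
    nlinarith
end
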